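/- Let ρ ∈ C_c^∞(ℝ³;ℝ). Then the function F : ℂ → ℂ defined by F(λ) = ∫_{ℝ³}∫_{ℝ³} ∂₁ρ(x) · (e^{−λ|x−y|}/(4π|x−y|)) · ∂₁ρ(y) dy dx is well defined and entire (complex analytic on all of ℂ). In particular it provides an analytic continuation of h(λ) = ⟨g_λ * ∂₁ρ, ∂₁ρ⟩ from the half-plane Re λ > 0 to the entire complex plane. -/

import Mathlib

noncomputable section
open MeasureTheory

abbrev R3 : Type := EuclideanSpace ℝ (Fin 3)

def e3 (i : Fin 3) : R3 := EuclideanSpace.single i 1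

/-- The integral kernel `g_λ(z) = e^{−λ|z|}/(4π|z|)`, for complex `λ`. -/
def gker (lam : ℂ) (z : R3) : ℂ :=
  Complex.exp (-lam * (‖z‖ : ℂ)) / (4 * Real.pi * (‖z‖ : ℂ))

/-- `F(λ) = ∫∫ ∂₁ρ(x) g_λ(x−y) ∂₁ρ(y) dy dx`, the analytic continuation of
`h(λ) = ⟨g_λ * ∂₁ρ, ∂₁ρ⟩`. -/
def hFun (ρ : R3 → ℝ) (lam : ℂ) : ℂ :=
  ∫ x : R3, ∫ y : R3,
    (fderiv ℝ ρ x (e3 0) : ℂ) * gker lam (x - y) * (fderiv ℝ ρ y (e3 0) : ℂ)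

section Aux

open Metric

set_option maxHeartbeats 1000000

lemma exists_dyadic {a R : ℝ} (ha : 0 < a) (haR : a < R) :
    ∃ n : ℕ, R / 2 ^ (n + 1) ≤ a ∧ a ≤ R / 2 ^ n := by
  have hR : 0 < R := ha.trans haR
  set m : ℕ := ⌊R / a⌋₊ with hm
  have ht1 : (1 : ℝ) ≤ R / a := by rw [le_div_iff₀ ha]; linarith
  have hm1 : 1 ≤ m := Nat.le_floor (by exact_mod_cast ht1)
  refine ⟨Nat.log 2 m, ?_, ?_⟩
  · have h2 : R / a < m + 1 := Nat.lt_floor_add_one _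
    have h3 : m + 1 ≤ 2 ^ (Nat.log 2 m + 1) := Nat.lt_pow_succ_log_self (by norm_num) m
    have h3' : (m : ℝ) + 1 ≤ 2 ^ (Nat.log 2 m + 1) := by exact_mod_cast h3
    rw [div_le_iff₀ (by positivity)]
    have : R / a < 2 ^ (Nat.log 2 m + 1) := lt_of_lt_of_le h2 h3'
    rw [div_lt_iff₀ ha] at this
    nlinarith
  · have h2 : (2 : ℕ) ^ Nat.log 2 m ≤ m := Nat.pow_log_le_self 2 (by omega)
    have h2' : (2 : ℝ) ^ Nat.log 2 m ≤ m := by exact_mod_cast h2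
    have h4 : (m : ℝ) ≤ R / a := Nat.floor_le (by positivity)
    rw [le_div_iff₀ (by positivity)]
    have : (2:ℝ) ^ Nat.log 2 m * a ≤ R := by
      rw [← le_div_iff₀ ha]; exact h2'.trans h4
    linarith

lemma finrank_R3 : Module.finrank ℝ R3 = 3 := by simp

lemma integrableOn_inv_norm_ball (R : ℝ) :
    IntegrableOn (fun z : R3 => ‖z‖⁻¹) (ball 0 R) := by
  rcases le_or_gt R 0 with hR | hR
  · rw [ball_eq_empty.2 hR]; exact integrableOn_empty
  -- annuli
  set s : ℕ → Set R3 := fun n => closedBall 0 (R / 2 ^ n) \ ball 0 (R / 2 ^ (n + 1)) with hs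
  have hmeas : ∀ n, MeasurableSet (s n) := fun n =>
    measurableSet_closedBall.diff measurableSet_ball
  have hfm : AEStronglyMeasurable (fun z : R3 => ‖z‖⁻¹) volume :=
    (measurable_norm.inv).aestronglyMeasurable
  have hbnd : ∀ n, ∀ z ∈ s n, ‖z‖⁻¹ ≤ 2 ^ (n + 1) / R := by
    intro n z hz
    have h1 : R / 2 ^ (n + 1) ≤ ‖z‖ := by
      have := hz.2
      simp only [mem_ball, dist_zero_right, not_lt] at this
      exact this
    have h0 : (0 : ℝ) < R / 2 ^ (n + 1) := by positivity
    calc ‖z‖⁻¹ ≤ (R / 2 ^ (n + 1))⁻¹ := by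
          exact inv_anti₀ h0 h1
      _ = 2 ^ (n + 1) / R := by field_simp
  have hint : ∀ n, IntegrableOn (fun z : R3 => ‖z‖⁻¹) (s n) := by
    intro n
    apply Measure.integrableOn_of_bounded (M := 2 ^ (n + 1) / R)
      ((measure_mono (Set.diff_subset)).trans_lt measure_closedBall_lt_top).ne hfm
    filter_upwards [ae_restrict_mem (hmeas n)] with z hz
    rw [Real.norm_eq_abs, abs_of_nonneg (by positivity)]
    exact hbnd n z hz
  have hint2 : IntegrableOn (fun z : R3 => ‖z‖⁻¹) (⋃ n, s n) := by
    apply integrableOn_iUnion_of_summable_integral_norm hint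
    have key : ∀ n, ∫ z in s n, ‖‖z‖⁻¹‖ ≤
        (2 * R ^ 2 * (volume (ball (0:R3) 1)).toReal) * (4⁻¹ : ℝ) ^ n := by
      intro n
      have hC : (0:ℝ) ≤ 2 ^ (n+1) / R := by positivity
      have h1 : ∫ z in s n, ‖‖z‖⁻¹‖ ≤ (2 ^ (n + 1) / R) * (volume (s n)).toReal := by
        have := norm_setIntegral_le_of_norm_le_const
            (μ := volume) (f := fun z : R3 => ‖‖z‖⁻¹‖) (C := 2 ^ (n + 1) / R)
            ((measure_mono (Set.diff_subset)).trans_lt measure_closedBall_lt_top)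
            (fun z hz => by
              rw [norm_norm, Real.norm_eq_abs, abs_of_nonneg (by positivity)]
              exact hbnd n z hz)
        rwa [Real.norm_of_nonneg (integral_nonneg (fun z => norm_nonneg _))] at this
      have h2 : (volume (s n)).toReal ≤ (R / 2 ^ n) ^ 3 * (volume (ball (0:R3) 1)).toReal := by
        have hsub : volume (s n) ≤ volume (closedBall (0:R3) (R / 2 ^ n)) :=
          measure_mono Set.diff_subset
        have hcb : volume (closedBall (0:R3) (R / 2 ^ n))
            = ENNReal.ofReal ((R / 2 ^ n) ^ 3) * volume (ball (0:R3) 1) := by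
          rw [Measure.addHaar_closedBall _ _ (by positivity)]
          congr 2
          · rw [finrank_R3]
        calc (volume (s n)).toReal ≤ (volume (closedBall (0:R3) (R / 2 ^ n))).toReal :=
              ENNReal.toReal_mono measure_closedBall_lt_top.ne hsub
          _ = (R / 2 ^ n) ^ 3 * (volume (ball (0:R3) 1)).toReal := by
              rw [hcb, ENNReal.toReal_mul, ENNReal.toReal_ofReal (by positivity)]
      calc ∫ z in s n, ‖‖z‖⁻¹‖
          ≤ (2 ^ (n + 1) / R) * ((R / 2 ^ n) ^ 3 * (volume (ball (0:R3) 1)).toReal) :=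
            h1.trans (by gcongr)
        _ = (2 * R ^ 2 * (volume (ball (0:R3) 1)).toReal) * (4⁻¹ : ℝ) ^ n := by
            have h8 : ((2:ℝ) ^ n) ^ 3 = 2 ^ n * 4 ^ n := by
              rw [← pow_mul, show (4:ℝ) = 2 ^ 2 by norm_num, ← pow_mul, ← pow_add]
              congr 1; ring
            field_simp
            rw [h8]
            have h9 : ((1:ℝ) / 4) ^ n * 4 ^ n = 1 := by rw [← mul_pow]; norm_num
            linear_combination (-(2 ^ n * 2 : ℝ)) * h9
    apply Summable.of_nonneg_of_le (fun n => integral_nonneg (fun z => norm_nonneg _)) key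
    exact (summable_geometric_of_lt_one (by norm_num) (by norm_num)).mul_left _
  -- cover
  apply IntegrableOn.mono_set (t := {(0:R3)} ∪ ⋃ n, s n)
  · apply IntegrableOn.union _ hint2
    rw [IntegrableOn, Measure.restrict_eq_zero.mpr (measure_singleton _)]
    exact integrable_zero_measure
  · intro z hz
    rcases eq_or_ne z 0 with rfl | hz0
    · exact Set.mem_union_left _ rfl
    · refine Set.mem_union_right _ ?_
      have hzn : 0 < ‖z‖ := norm_pos_iff.2 hz0
      have hzR : ‖z‖ < R := by simpa [mem_ball, dist_zero_right] using hz
      obtain ⟨n, hn1, hn2⟩ := exists_dyadic hzn hzR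
      refine Set.mem_iUnion.2 ⟨n, ?_, ?_⟩
      · simpa [mem_closedBall, dist_zero_right] using hn2
      · simpa [mem_ball, dist_zero_right, not_lt] using hn1

lemma gker_measurable (lam : ℂ) : Measurable (gker lam) := by
  unfold gker
  apply Measurable.div
  · exact ((Complex.measurable_ofReal.comp measurable_norm).const_mul (-lam)).cexp
  · exact (Complex.measurable_ofReal.comp measurable_norm).const_mul (4 * Real.pi)

lemma gker_eq (lam : ℂ) (z : R3) :
    gker lam z = Complex.exp (-lam * ‖z‖) * (((4 * Real.pi * ‖z‖)⁻¹ : ℝ) : ℂ) := by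
  rw [gker, div_eq_mul_inv]
  push_cast
  ring

lemma gker_norm (lam : ℂ) (z : R3) :
    ‖gker lam z‖ = Real.exp (-(lam.re) * ‖z‖) * ((4 * Real.pi)⁻¹ * ‖z‖⁻¹) := by
  rw [gker_eq, norm_mul, Complex.norm_real, Real.norm_eq_abs,
    abs_of_nonneg (by positivity), Complex.norm_exp, mul_inv]
  congr 2
  simp [Complex.mul_re]

lemma neg_re_le {lam : ℂ} {A : ℝ} (hA : ‖lam‖ ≤ A) : -(lam.re) ≤ A := by
  have := Complex.abs_re_le_norm lam
  cases abs_le.1 this with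
  | intro h _ => linarith

lemma neg_re_mul_le {lam : ℂ} {A r R : ℝ} (hA : ‖lam‖ ≤ A) (hr : 0 ≤ r) (hrR : r ≤ R) :
    -(lam.re) * r ≤ A * R := by
  have hA0 : 0 ≤ A := (norm_nonneg lam).trans hA
  calc -(lam.re) * r ≤ A * r := mul_le_mul_of_nonneg_right (neg_re_le hA) hr
    _ ≤ A * R := mul_le_mul_of_nonneg_left hrR hA0

lemma gker_norm_le {lam : ℂ} {A R : ℝ} (hA : ‖lam‖ ≤ A) {z : R3} (hz : ‖z‖ ≤ R) :
    ‖gker lam z‖ ≤ Real.exp (A * R) * ((4 * Real.pi)⁻¹ * ‖z‖⁻¹) := by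
  rw [gker_norm]
  apply mul_le_mul_of_nonneg_right _ (by positivity)
  exact Real.exp_le_exp.2 (neg_re_mul_le hA (norm_nonneg z) hz)

lemma key_int (φ : R3 → ℝ) (hc : Continuous φ) (hcs : HasCompactSupport φ) (lam : ℂ) :
    Integrable (fun z : R3 × R3 => (φ z.1 : ℂ) * gker lam (z.1 - z.2) * (φ z.2 : ℂ))
      (volume.prod volume) := by
  obtain ⟨C, hC⟩ := hcs.isBounded.subset_closedBall (0 : R3)
  obtain ⟨M, hM⟩ := hcs.exists_bound_of_continuous hc
  have hM0 : 0 ≤ M := (norm_nonneg _).trans (hM 0)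
  set R : ℝ := 2 * |C| + 1 with hR
  have hmF : AEStronglyMeasurable
      (fun z : R3 × R3 => (φ z.1 : ℂ) * gker lam (z.1 - z.2) * (φ z.2 : ℂ))
      (volume.prod volume) := by
    apply Measurable.aestronglyMeasurable
    exact ((Complex.measurable_ofReal.comp (hc.measurable.comp measurable_fst)).mul
      ((gker_measurable lam).comp (measurable_fst.sub measurable_snd))).mul
      (Complex.measurable_ofReal.comp (hc.measurable.comp measurable_snd))
  have hN : MeasurePreserving (fun p : R3 × R3 => (p.1, -p.2))
      (volume.prod volume) (volume.prod volume) := by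
    have := (MeasurePreserving.id (volume : Measure R3)).prod
      (Measure.measurePreserving_neg (volume : Measure R3))
    exact this
  have hT : MeasurePreserving (fun p : R3 × R3 => (p.1, p.1 + p.2))
      (volume.prod volume) (volume.prod volume) :=
    measurePreserving_prod_add volume volume
  have he : MeasurePreserving (fun p : R3 × R3 => (p.1, p.1 - p.2))
      (volume.prod volume) (volume.prod volume) := by
    have h2 := hT.comp hN
    have h3 : ((fun p : R3 × R3 => (p.1, p.1 + p.2)) ∘ fun p : R3 × R3 => (p.1, -p.2))
        = fun p : R3 × R3 => (p.1, p.1 - p.2) := by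
      funext p; simp [Function.comp, sub_eq_add_neg]
    rwa [h3] at h2
  refine (he.integrable_comp hmF).mp ?_
  set b : R3 → ℝ := (ball (0:R3) R).indicator
      (fun z => M * (Real.exp (‖lam‖ * R) * (4 * Real.pi)⁻¹) * ‖z‖⁻¹) with hb
  have hbint : Integrable b volume := by
    apply IntegrableOn.integrable_indicator _ measurableSet_ball
    exact (integrableOn_inv_norm_ball R).const_mul _
  have hphiint : Integrable (fun x : R3 => ‖φ x‖) volume :=
    (hc.integrable_of_hasCompactSupport hcs).norm
  apply (hphiint.mul_prod hbint).mono' (hmF.comp_measurePreserving he)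
  apply Filter.Eventually.of_forall
  rintro ⟨x, z⟩
  simp only [Function.comp_apply, sub_sub_cancel]
  by_cases hzb : z ∈ ball (0:R3) R
  · have hzR : ‖z‖ ≤ R := by
      have := mem_ball.1 hzb
      rw [dist_zero_right] at this
      exact this.le
    rw [hb, Set.indicator_of_mem hzb, norm_mul, norm_mul,
      Complex.norm_real, Complex.norm_real]
    calc ‖φ x‖ * ‖gker lam z‖ * ‖φ (x - z)‖
        ≤ ‖φ x‖ * (Real.exp (‖lam‖ * R) * ((4 * Real.pi)⁻¹ * ‖z‖⁻¹)) * M := by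
          gcongr
          · exact gker_norm_le le_rfl hzR
          · exact hM _
      _ = ‖φ x‖ * (M * (Real.exp (‖lam‖ * R) * (4 * Real.pi)⁻¹) * ‖z‖⁻¹) := by ring
  · rw [hb, Set.indicator_of_notMem hzb, mul_zero]
    have hdisj : φ x = 0 ∨ φ (x - z) = 0 := by
      by_contra hcon
      push_neg at hcon
      have hx : x ∈ tsupport φ :=
        subset_tsupport _ (by simpa [Function.mem_support] using hcon.1)
      have hy : x - z ∈ tsupport φ :=
        subset_tsupport _ (by simpa [Function.mem_support] using hcon.2)
      have h1 : ‖x‖ ≤ C := by simpa [mem_closedBall, dist_zero_right] using hC hx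
      have h2 : ‖x - z‖ ≤ C := by simpa [mem_closedBall, dist_zero_right] using hC hy
      have h3 : ‖z‖ < R := by
        have h4 : ‖z‖ ≤ ‖x‖ + ‖x - z‖ := by
          have := norm_sub_le x (x - z)
          simpa [sub_sub_cancel] using this
        have hCabs : C ≤ |C| := le_abs_self C
        rw [hR]; linarith
      exact hzb (by simpa [mem_ball, dist_zero_right] using h3)
    rcases hdisj with h | h <;> simp [h]

end Aux

open Metric in
theorem stmt_8 (ρ : R3 → ℝ) (hρ : ContDiff ℝ (⊤ : ℕ∞) ρ) (hρc : HasCompactSupport ρ) :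
    (∀ lam : ℂ, Integrable (fun z : R3 × R3 =>
      (fderiv ℝ ρ z.1 (e3 0) : ℂ) * gker lam (z.1 - z.2) * (fderiv ℝ ρ z.2 (e3 0) : ℂ))) ∧
    Differentiable ℂ (hFun ρ) := by
  classical
  set φ : R3 → ℝ := fun x => fderiv ℝ ρ x (e3 0) with hphi
  have hc : Continuous φ := by
    have h1 : Continuous (fderiv ℝ ρ) := hρ.continuous_fderiv (by simp)
    exact (ContinuousLinearMap.apply ℝ ℝ (e3 0)).continuous.comp h1
  have hcs : HasCompactSupport φ := hρc.fderiv_apply (𝕜 := ℝ) (e3 0)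
  have hintP : ∀ lam : ℂ, Integrable
      (fun z : R3 × R3 => (φ z.1 : ℂ) * gker lam (z.1 - z.2) * (φ z.2 : ℂ))
      (volume.prod volume) := fun lam => key_int φ hc hcs lam
  have hvol : (volume : Measure (R3 × R3)) = (volume : Measure R3).prod volume :=
    rfl
  constructor
  · intro lam
    rw [hvol]
    exact hintP lam
  -- differentiability
  obtain ⟨C, hC⟩ := hcs.isBounded.subset_closedBall (0 : R3)
  obtain ⟨M, hM⟩ := hcs.exists_bound_of_continuous hc
  have hM0 : 0 ≤ M := (norm_nonneg _).trans (hM 0)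
  set R : ℝ := 2 * |C| + 1 with hR
  have heq : hFun ρ = fun lam : ℂ =>
      ∫ p : R3 × R3, (φ p.1 : ℂ) * gker lam (p.1 - p.2) * (φ p.2 : ℂ)
        ∂((volume : Measure R3).prod volume) := by
    funext lam
    rw [hFun]
    exact (integral_prod _ (hintP lam)).symm
  rw [heq]
  intro lam₀
  have hphiint : Integrable (fun x : R3 => ‖φ x‖) volume :=
    (hc.integrable_of_hasCompactSupport hcs).norm
  have hdiag : ((volume : Measure R3).prod volume) {p : R3 × R3 | p.1 = p.2} = 0 := by
    have hsm : MeasurableSet {p : R3 × R3 | p.1 = p.2} :=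
      (isClosed_eq continuous_fst continuous_snd).measurableSet
    rw [Measure.prod_apply hsm]
    have hfib : ∀ x : R3, (volume ((Prod.mk x) ⁻¹' {p : R3 × R3 | p.1 = p.2})) = 0 := by
      intro x
      have hfe : (Prod.mk x) ⁻¹' {p : R3 × R3 | p.1 = p.2} = {x} := by
        ext y; simp [eq_comm]
      rw [hfe]; exact measure_singleton x
    simp [hfib]
  have key := hasDerivAt_integral_of_dominated_loc_of_deriv_le
    (μ := (volume : Measure R3).prod volume) (x₀ := lam₀) (s := Metric.ball lam₀ 1)
    (F := fun lam (p : R3 × R3) => (φ p.1 : ℂ) * gker lam (p.1 - p.2) * (φ p.2 : ℂ))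
    (F' := fun lam (p : R3 × R3) =>
      (φ p.1 : ℂ) * (-Complex.exp (-lam * ‖p.1 - p.2‖) / (4 * Real.pi)) * (φ p.2 : ℂ))
    (bound := fun p : R3 × R3 =>
      ‖φ p.1‖ * ((Real.exp ((‖lam₀‖ + 1) * R) * (4 * Real.pi)⁻¹) * ‖φ p.2‖))
    (Metric.ball_mem_nhds lam₀ one_pos) ?_ ?_ ?_ ?_ ?_ ?_
  · exact key.2.differentiableAt
  · -- measurability of F lam
    apply Filter.Eventually.of_forall
    intro lam
    apply Measurable.aestronglyMeasurable
    exact ((Complex.measurable_ofReal.comp (hc.measurable.comp measurable_fst)).mul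
      ((gker_measurable lam).comp (measurable_fst.sub measurable_snd))).mul
      (Complex.measurable_ofReal.comp (hc.measurable.comp measurable_snd))
  · exact hintP lam₀
  · -- measurability of F' lam₀
    apply Measurable.aestronglyMeasurable
    refine Measurable.mul (Measurable.mul ?_ ?_) ?_
    · exact Complex.measurable_ofReal.comp (hc.measurable.comp measurable_fst)
    · exact (((Complex.measurable_ofReal.comp
        (measurable_norm.comp (measurable_fst.sub measurable_snd))).const_mul
        (-lam₀)).cexp.neg).div_const _
    · exact Complex.measurable_ofReal.comp (hc.measurable.comp measurable_snd)
  · -- bound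
    apply Filter.Eventually.of_forall
    rintro ⟨x, y⟩ lam hlam
    have hbnd0 : (0:ℝ) ≤ Real.exp ((‖lam₀‖ + 1) * R) * (4 * Real.pi)⁻¹ := by positivity
    by_cases hsupp : x ∈ tsupport φ ∧ y ∈ tsupport φ
    · have h1 : ‖x‖ ≤ C := by simpa [Metric.mem_closedBall, dist_zero_right] using hC hsupp.1
      have h2 : ‖y‖ ≤ C := by simpa [Metric.mem_closedBall, dist_zero_right] using hC hsupp.2
      have hr : ‖x - y‖ ≤ R := by
        have := norm_sub_le x y
        have hCabs : C ≤ |C| := le_abs_self C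
        rw [hR]; linarith
      have hlamA : ‖lam‖ ≤ ‖lam₀‖ + 1 := by
        have := mem_ball_iff_norm.1 hlam
        calc ‖lam‖ = ‖lam₀ + (lam - lam₀)‖ := by ring_nf
          _ ≤ ‖lam₀‖ + ‖lam - lam₀‖ := norm_add_le _ _
          _ ≤ ‖lam₀‖ + 1 := by linarith
      have hker : ‖-Complex.exp (-lam * ‖x - y‖) / (4 * Real.pi)‖
          ≤ Real.exp ((‖lam₀‖ + 1) * R) * (4 * Real.pi)⁻¹ := by
        rw [norm_div, norm_neg, Complex.norm_exp]
        have hre : (-lam * (‖x - y‖ : ℂ)).re = -(lam.re) * ‖x - y‖ := by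
          simp [Complex.mul_re]
        rw [hre]
        have hden : ‖(4 * (Real.pi : ℂ))‖ = 4 * Real.pi := by
          rw [show (4 * (Real.pi : ℂ)) = ((4 * Real.pi : ℝ) : ℂ) by push_cast; ring,
            Complex.norm_real, Real.norm_eq_abs, abs_of_nonneg (by positivity)]
        rw [hden, div_eq_mul_inv]
        apply mul_le_mul_of_nonneg_right _ (by positivity)
        exact Real.exp_le_exp.2 (neg_re_mul_le hlamA (norm_nonneg _) hr)
      rw [norm_mul, norm_mul, Complex.norm_real, Complex.norm_real]
      calc ‖φ x‖ * ‖-Complex.exp (-lam * ‖x - y‖) / (4 * Real.pi)‖ * ‖φ y‖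
          ≤ ‖φ x‖ * (Real.exp ((‖lam₀‖ + 1) * R) * (4 * Real.pi)⁻¹) * ‖φ y‖ := by
            gcongr
        _ = ‖φ x‖ * ((Real.exp ((‖lam₀‖ + 1) * R) * (4 * Real.pi)⁻¹) * ‖φ y‖) := by
            ring
    · -- one of the factors vanishes
      have hzero : φ x = 0 ∨ φ y = 0 := by
        by_contra hcon
        push_neg at hcon
        exact hsupp ⟨subset_tsupport _ (by simpa [Function.mem_support] using hcon.1),
          subset_tsupport _ (by simpa [Function.mem_support] using hcon.2)⟩
      have hrhs : (0:ℝ) ≤ ‖φ x‖ * ((Real.exp ((‖lam₀‖ + 1) * R) * (4 * Real.pi)⁻¹) * ‖φ y‖) := by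
        positivity
      rcases hzero with h | h <;> simp [h, hrhs]
  · -- integrability of bound
    exact hphiint.mul_prod (hphiint.const_mul _)
  · -- differentiability in lam, off the diagonal
    have hae : ∀ᵐ p : R3 × R3 ∂((volume : Measure R3).prod volume),
        p ∉ {p : R3 × R3 | p.1 = p.2} := measure_eq_zero_iff_ae_notMem.1 hdiag
    filter_upwards [hae] with p hp lam _
    have hne : p.1 ≠ p.2 := hp
    have hr0 : (‖p.1 - p.2‖ : ℝ) ≠ 0 := norm_ne_zero_iff.2 (sub_ne_zero.2 hne)
    have h1 : HasDerivAt (fun lam : ℂ => -lam * (‖p.1 - p.2‖ : ℂ))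
        (-(‖p.1 - p.2‖ : ℂ)) lam := by
      simpa using ((hasDerivAt_id lam).neg.mul_const ((‖p.1 - p.2‖ : ℝ) : ℂ))
    have h2 := h1.cexp
    have h3 := h2.div_const (4 * (Real.pi : ℂ) * (‖p.1 - p.2‖ : ℂ))
    have h4 := (h3.const_mul ((φ p.1 : ℝ) : ℂ)).mul_const ((φ p.2 : ℝ) : ℂ)
    have hfun : (fun lam : ℂ => ((φ p.1 : ℝ) : ℂ) *
        (Complex.exp (-lam * (‖p.1 - p.2‖ : ℂ)) / (4 * (Real.pi : ℂ) * (‖p.1 - p.2‖ : ℂ))) *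
        ((φ p.2 : ℝ) : ℂ))
        = fun lam : ℂ => (φ p.1 : ℂ) * gker lam (p.1 - p.2) * (φ p.2 : ℂ) := by
      funext lam
      rw [gker]
    rw [hfun] at h4
    convert h4 using 1
    · rfl
    have hrC : ((‖p.1 - p.2‖ : ℝ) : ℂ) ≠ 0 := Complex.ofReal_ne_zero.2 hr0
    have hpiC : ((Real.pi : ℝ) : ℂ) ≠ 0 := Complex.ofReal_ne_zero.2 Real.pi_ne_zero
    simp only [neg_div, mul_neg, neg_mul, neg_inj]
    rw [mul_div_mul_right _ _ hrC]
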